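/- Let q = 2 and π = x² + x + 1 ∈ F_2[x], and let α ∈ K_∞ satisfy α² + α + 1 = 0. Then α is not 0-approximable: no sequence of 0-approximations of α converges to α. (Second assertion of Example 8.4 of the paper: the roots of α² + α + 1 = 0 are explicit elements that are (−1)-approximable but not 0-approximable.) -/

import Mathlib

/-! Nonzero elements of `A` are fractions `h / π ^ n` with `deg h ≤ 2n`, so they have absolute
value at least `1`. If `f / g` were a `0`-approximation of a root `α` of `X² + X + 1`, the norm
`f² + fg + g² = (f - αg)(f - α'g)`, with `α' = -1 - α` the other root, would be an element of `A`
of absolute value `< 1`, hence zero. Then `f / g` would be a root of `X² + X + 1` in `F₂(x)`;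
since `F₂[x]` is integrally closed and `p (p + 1) = -1` forces `p` to be constant, such a root
lies in `F₂`, which has none. -/

open Filter Polynomial MeasureTheory IsDedekindDomain
open scoped Multiplicative

/-- The real absolute value attached to a `ℤₘ₀`-valued valuation with base `q`:
`Multiplicative.ofAdd n ↦ q ^ n` and `0 ↦ 0`. -/
noncomputable def zabs (q : ℕ) (x : WithZero (Multiplicative ℤ)) : ℝ :=
  if hx : x = 0 then 0 else (q : ℝ) ^ Multiplicative.toAdd (WithZero.unzero hx)

variable (Fq : Type) [Field Fq] [Fintype Fq]

/-- The height-one prime `(π)` of `F_q[x]` attached to an irreducible polynomial `π`. -/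
noncomputable def piPrime (π : Polynomial Fq) (hirr : Irreducible π) :
    HeightOneSpectrum (Polynomial Fq) where
  asIdeal := Ideal.span {π}
  isPrime := (Ideal.span_singleton_prime hirr.ne_zero).mpr hirr.prime
  ne_bot := by
    simp only [ne_eq, Ideal.span_singleton_eq_bot]
    exact hirr.ne_zero

/-- The completion `K_∞` of `K = F_q(x)` with respect to the `π`-adic valuation `ν`
(normalized by `ν π = 1`). -/
noncomputable abbrev Kinf (π : Polynomial Fq) (hirr : Irreducible π) : Type :=
  (piPrime Fq π hirr).adicCompletion (RatFunc Fq)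

/-- The absolute value `|h| = q ^ (-ν h)` on `K_∞`. -/
noncomputable def absKinf (q : ℕ) (π : Polynomial Fq) (hirr : Irreducible π)
    (h : Kinf Fq π hirr) : ℝ :=
  zabs q (Valued.v h)

/-- The inclusion `K = F_q(x) → K_∞`. -/
noncomputable def toKinf (π : Polynomial Fq) (hirr : Irreducible π) (r : RatFunc Fq) :
    Kinf Fq π hirr := r

/-- The ring `A` of rational functions regular away from the closed point defined by `π`:
the `F_q`-subalgebra of `F_q(x)` generated by `1/π`, `x/π` and `x²/π`. -/
noncomputable def ringA (π : Polynomial Fq) : Subalgebra Fq (RatFunc Fq) :=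
  Algebra.adjoin Fq
    {(algebraMap (Polynomial Fq) (RatFunc Fq) π)⁻¹,
      algebraMap (Polynomial Fq) (RatFunc Fq) X / algebraMap (Polynomial Fq) (RatFunc Fq) π,
      algebraMap (Polynomial Fq) (RatFunc Fq) (X ^ 2) / algebraMap (Polynomial Fq) (RatFunc Fq) π}

/-- `f/g` is an `M`-approximation of `α ∈ K_∞`: `f, g ∈ A`, `g ≠ 0`, `fA + gA = A` and
`|α - f/g| < q^(-M)/|g|²`. -/
def IsApproxA (q : ℕ) (π : Polynomial Fq) (hirr : Irreducible π) (M : ℤ)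
    (α : Kinf Fq π hirr) (f g : ringA Fq π) : Prop :=
  g ≠ 0 ∧ Ideal.span {f, g} = (⊤ : Ideal (ringA Fq π)) ∧
    absKinf Fq q π hirr
        (α - toKinf Fq π hirr (f : RatFunc Fq) / toKinf Fq π hirr (g : RatFunc Fq)) <
      (q : ℝ) ^ (-M) / absKinf Fq q π hirr (toKinf Fq π hirr (g : RatFunc Fq)) ^ 2

/-- `π = x² + x + 1` over `F₂`. -/
noncomputable def piPoly : Polynomial (ZMod 2) := X ^ 2 + X + 1

lemma piPoly_monic : (piPoly).Monic := by
  unfold piPoly; monicity!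

lemma piPoly_natDegree : (piPoly).natDegree = 2 := by
  unfold piPoly; compute_degree!

lemma piPoly_irreducible : Irreducible piPoly := by
  by_contra h
  rcases (piPoly_monic.not_irreducible_iff_exists_add_mul_eq_coeff piPoly_natDegree).mp h with
    ⟨c₁, c₂, h0, h1⟩
  have e0 : (piPoly).coeff 0 = 1 := by
    simp [piPoly, coeff_one, coeff_X]
  have e1 : (piPoly).coeff 1 = 1 := by
    simp [piPoly, coeff_one, coeff_X]
  rw [e0] at h0
  rw [e1] at h1
  revert h0 h1
  revert c₁ c₂
  decide

namespace Valuation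

variable {L Γ₀ : Type*} [Field L] [LinearOrderedCommGroupWithZero Γ₀] (v : Valuation L Γ₀)

/-- `(2α + 1)² = -3`, and `v 3 ≤ 1` for every valuation. -/
lemma map_two_mul_add_one_le_one {α : L} (hα : α ^ 2 + α + 1 = 0) : v (2 * α + 1) ≤ 1 := by
  have h3 : v (3 : L) ≤ 1 := by
    rw [show (3 : L) = 1 + 1 + 1 by norm_num]
    exact v.map_add_le (v.map_add_le v.map_one.le v.map_one.le) v.map_one.le
  refine (pow_le_one_iff two_ne_zero).mp ?_
  rwa [← map_pow, show (2 * α + 1) ^ 2 = -3 by linear_combination 4 * hα, map_neg]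

lemma map_sq_add_mul_add_sq_lt_one {α f g : L} (hα : α ^ 2 + α + 1 = 0) (hg : 1 ≤ v g)
    (happrox : v (α - f / g) * v g ^ 2 < 1) : v (f ^ 2 + f * g + g ^ 2) < 1 := by
  set ε := α - f / g with hε_def
  have hg0 : g ≠ 0 := v.ne_zero_iff.mp (ne_of_gt (lt_of_lt_of_le zero_lt_one hg))
  have hε : v ε < 1 := (le_mul_of_one_le_right' (one_le_pow_of_one_le' hg 2)).trans_lt happrox
  have hnorm : f ^ 2 + f * g + g ^ 2 = g ^ 2 * ε * (ε - (2 * α + 1)) := by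
    rw [hε_def]
    field_simp
    linear_combination g ^ 2 * hα
  calc v (f ^ 2 + f * g + g ^ 2) = v ε * v g ^ 2 * v (ε - (2 * α + 1)) := by
        rw [hnorm, map_mul, map_mul, map_pow, mul_comm (v g ^ 2)]
    _ ≤ v ε * v g ^ 2 :=
        mul_le_of_le_one_right' (v.map_sub_le hε.le (v.map_two_mul_add_one_le_one hα))
    _ < 1 := happrox

end Valuation

lemma RatFunc.exists_sq_add_add_one_eq_zero {K : Type*} [Field K] {r : RatFunc K}
    (hr : r ^ 2 + r + 1 = 0) : ∃ c : K, c ^ 2 + c + 1 = 0 := by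
  have hmonic : (Polynomial.X ^ 2 + Polynomial.X + 1 : K[X][X]).Monic := by monicity!
  have hint : IsIntegral K[X] r := ⟨_, hmonic, by simpa using hr⟩
  obtain ⟨p, rfl⟩ := IsIntegrallyClosed.isIntegral_iff.mp hint
  have hp : p ^ 2 + p + 1 = 0 :=
    IsFractionRing.injective K[X] (RatFunc K) (by simpa using hr)
  obtain ⟨c, -, rfl⟩ := Polynomial.isUnit_iff.mp
    (IsUnit.of_mul_eq_one (b := -(p + 1)) (by linear_combination -hp))
  exact ⟨c, Polynomial.C_injective (by simpa using hp)⟩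

lemma zabs_eq_toNNReal {q : ℕ} (hq : (q : NNReal) ≠ 0) (x : WithZero (Multiplicative ℤ)) :
    zabs q x = WithZeroMulInt.toNNReal hq x := by
  by_cases hx : x = 0
  · simp [zabs, hx]
  · simp [zabs, hx, WithZeroMulInt.toNNReal_neg_apply hq hx]

/-- The bound `deg h ≤ n deg π` on `h = r π ^ n` is regularity of `r` at infinity. -/
noncomputable def regularAwayFrom {F : Type*} [Field F] (π : F[X]) : Subalgebra F (RatFunc F) where
  carrier := {r | ∃ n : ℕ, ∃ h : F[X], h.natDegree ≤ n * π.natDegree ∧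
    algebraMap F[X] (RatFunc F) h = r * algebraMap F[X] (RatFunc F) π ^ n}
  mul_mem' := by
    rintro r s ⟨m, h, hh, hr⟩ ⟨n, k, hk, hs⟩
    refine ⟨m + n, h * k, natDegree_mul_le.trans (by rw [add_mul]; omega), ?_⟩
    rw [map_mul, hr, hs]
    ring
  add_mem' := by
    rintro r s ⟨m, h, hh, hr⟩ ⟨n, k, hk, hs⟩
    refine ⟨m + n, h * π ^ n + k * π ^ m, ?_, ?_⟩
    · have := natDegree_mul_le (p := h) (q := π ^ n)
      have := natDegree_mul_le (p := k) (q := π ^ m)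
      have := natDegree_pow_le (p := π) (n := n)
      have := natDegree_pow_le (p := π) (n := m)
      refine (natDegree_add_le _ _).trans (max_le ?_ ?_) <;> rw [add_mul] <;> omega
    · simp only [map_add, map_mul, map_pow, hr, hs]
      ring
  algebraMap_mem' c := ⟨0, C c, by simp, by simp [RatFunc.algebraMap_C]⟩

section Approximations

variable {F : Type} [Field F] {π : F[X]} (hirr : Irreducible π)

lemma toKinf_eq_algebraMap (r : RatFunc F) :
    toKinf F π hirr r = algebraMap (RatFunc F) (Kinf F π hirr) r := rfl

lemma ringA_le_regularAwayFrom (hπ : 2 ≤ π.natDegree) : ringA F π ≤ regularAwayFrom π := by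
  have hπ0 : algebraMap F[X] (RatFunc F) π ≠ 0 := by
    simpa using ne_zero_of_natDegree_gt (n := 0) (by omega)
  refine Algebra.adjoin_le ?_
  rintro r (rfl | rfl | rfl)
  · exact ⟨1, 1, by simp, by simp [hπ0]⟩
  · exact ⟨1, X, by simpa using le_trans one_le_two hπ, by field_simp⟩
  · exact ⟨1, X ^ 2, by simpa using hπ, by field_simp⟩

lemma exp_neg_le_intValuation_piPrime {h : F[X]} (hh : h ≠ 0) {n : ℕ}
    (hd : h.natDegree ≤ n * π.natDegree) :
    WithZero.exp (-(n : ℤ)) ≤ (piPrime F π hirr).intValuation h := by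
  have hndvd : ¬ π ^ (n + 1) ∣ h := fun hdvd => by
    have := natDegree_le_of_dvd hdvd hh
    rw [natDegree_pow, add_mul, one_mul] at this
    have := hirr.natDegree_pos
    omega
  have hlt : WithZero.exp (-((n + 1 : ℕ) : ℤ)) < (piPrime F π hirr).intValuation h := by
    rw [← not_le, HeightOneSpectrum.intValuation_le_pow_iff_dvd]
    rwa [show (piPrime F π hirr).asIdeal = Ideal.span {π} from rfl, Ideal.span_singleton_pow,
      Ideal.span_singleton_dvd_span_singleton_iff_dvd]
  rw [← WithZero.exp_log (HeightOneSpectrum.intValuation_ne_zero _ h hh), WithZero.exp_lt_exp]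
    at hlt
  rw [← WithZero.exp_log (HeightOneSpectrum.intValuation_ne_zero _ h hh), WithZero.exp_le_exp]
  omega

lemma one_le_valued_toKinf (hπ : 2 ≤ π.natDegree) {a : RatFunc F} (ha : a ∈ ringA F π)
    (ha0 : a ≠ 0) : 1 ≤ Valued.v (toKinf F π hirr a) := by
  obtain ⟨n, h, hd, hh⟩ := ringA_le_regularAwayFrom hπ ha
  have hh0 : h ≠ 0 := by
    rintro rfl
    simp [ha0, ne_zero_of_natDegree_gt (n := 0) (by omega : 0 < π.natDegree)] at hh
  have hv := congrArg ((piPrime F π hirr).valuation (RatFunc F)) hh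
  rw [map_mul, map_pow, HeightOneSpectrum.valuation_of_algebraMap,
    HeightOneSpectrum.valuation_of_algebraMap,
    HeightOneSpectrum.intValuation_singleton _ hirr.ne_zero rfl, ← WithZero.exp_nsmul] at hv
  have hge := exp_neg_le_intValuation_piPrime hirr hh0 hd
  rw [hv, nsmul_eq_mul, mul_neg_one] at hge
  rw [toKinf, HeightOneSpectrum.valuedAdicCompletion_eq_valuation']
  exact (le_mul_iff_one_le_left WithZero.exp_pos).mp hge

lemma IsApproxA.valued_mul_sq_lt_one {q : ℕ} (hq : 1 < q) {α : Kinf F π hirr}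
    {f g : ringA F π} (h : IsApproxA F q π hirr 0 α f g) :
    Valued.v (α - toKinf F π hirr f / toKinf F π hirr g) *
      Valued.v (toKinf F π hirr g) ^ 2 < 1 := by
  have hq' : (1 : NNReal) < q := by exact_mod_cast hq
  have hlt := h.2.2
  rw [absKinf, absKinf, zabs_eq_toNNReal hq'.ne_bot, zabs_eq_toNNReal hq'.ne_bot, neg_zero,
    zpow_zero] at hlt
  have hg : (WithZeroMulInt.toNNReal hq'.ne_bot (Valued.v (toKinf F π hirr g)) : ℝ) ≠ 0 := by
    intro h0
    rw [h0] at hlt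
    simp at hlt
  rw [lt_div_iff₀ (by positivity)] at hlt
  rw [← (WithZeroMulInt.toNNReal_strictMono hq').lt_iff_lt, map_mul, map_pow, map_one]
  exact_mod_cast hlt

theorem not_isApproxA_zero (hπ : 2 ≤ π.natDegree) (hF : ∀ c : F, c ^ 2 + c + 1 ≠ 0)
    {q : ℕ} (hq : 1 < q) {α : Kinf F π hirr} (hα : α ^ 2 + α + 1 = 0) (f g : ringA F π) :
    ¬ IsApproxA F q π hirr 0 α f g := by
  intro happ
  have hg : 1 ≤ Valued.v (toKinf F π hirr g) :=
    one_le_valued_toKinf hirr hπ g.2 (by exact_mod_cast happ.1)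
  have hN : Valued.v (toKinf F π hirr ↑(f ^ 2 + f * g + g ^ 2)) < 1 := by
    simpa [toKinf_eq_algebraMap] using
      Valued.v.map_sq_add_mul_add_sq_lt_one hα hg (happ.valued_mul_sq_lt_one hirr hq)
  have hN0 : ((f ^ 2 + f * g + g ^ 2 : ringA F π) : RatFunc F) = 0 := by
    by_contra hN0
    exact (one_le_valued_toKinf hirr hπ (SetLike.coe_mem _) hN0).not_gt hN
  have hg0 : (g : RatFunc F) ≠ 0 := by exact_mod_cast happ.1
  have hroot : ((f : RatFunc F) / g) ^ 2 + (f : RatFunc F) / g + 1 = 0 := by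
    push_cast at hN0
    field_simp
    linear_combination hN0
  obtain ⟨c, hc⟩ := RatFunc.exists_sq_add_add_one_eq_zero hroot
  exact hF c hc

end Approximations

/-- Example 8.4, second assertion: for `q = 2`, `π = x² + x + 1`, any
`α ∈ K_∞` with `α² + α + 1 = 0` is not `0`-approximable: no sequence of `0`-approximations
of `α` converges to `α`. -/
theorem quadratic_root_not_zero_approximable
    (α : Kinf (ZMod 2) piPoly piPoly_irreducible) (hα : α ^ 2 + α + 1 = 0) :
    ¬ ∃ f g : ℕ → ringA (ZMod 2) piPoly,
        (∀ n, IsApproxA (ZMod 2) 2 piPoly piPoly_irreducible 0 α (f n) (g n)) ∧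
        Tendsto
          (fun n => toKinf (ZMod 2) piPoly piPoly_irreducible ((f n : RatFunc (ZMod 2))) /
            toKinf (ZMod 2) piPoly piPoly_irreducible ((g n : RatFunc (ZMod 2))))
          atTop (nhds α) := by
  rintro ⟨f, g, happ, -⟩
  exact not_isApproxA_zero piPoly_irreducible piPoly_natDegree.ge (by decide) one_lt_two hα
    (f 0) (g 0) (happ 0)
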